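/- arXiv:2305.08858 — 2 statements merged into one kernel-verified Lean document; each statement's English description precedes it below -/
import Mathlib

section
/- A proper graded submodule U of M is graded weakly J_gr-semiprime if and only if for every graded submodule K of M, every homogeneous r ∈ h(R), and every n ∈ ℤ⁺ with 0 ≠ ⟨r⟩ⁿK ⊆ U, one has ⟨r⟩K ⊆ U + J_gr(M). -/
open Pointwise

/-- A submodule is graded if it is generated by its homogeneous elements. -/
def IsGradedSub {Γ R M σ : Type*} [CommRing R] [AddCommGroup M] [Module R M]
    [SetLike σ M] (ℳ : Γ → σ) (U : Submodule R M) : Prop :=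
  U = Submodule.span R {m | m ∈ U ∧ SetLike.IsHomogeneousElem ℳ m}

/-- A graded maximal submodule. -/
def IsGrMaximal {Γ R M σ : Type*} [CommRing R] [AddCommGroup M] [Module R M]
    [SetLike σ M] (ℳ : Γ → σ) (B : Submodule R M) : Prop :=
  IsGradedSub ℳ B ∧ B ≠ ⊤ ∧
    ∀ L : Submodule R M, IsGradedSub ℳ L → B ≤ L → L = B ∨ L = ⊤

/-- The graded Jacobson radical: the intersection of all graded maximal submodules
(the whole module if there are none). -/
def Jgr {Γ R M σ : Type*} [CommRing R] [AddCommGroup M] [Module R M]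
    [SetLike σ M] (ℳ : Γ → σ) : Submodule R M :=
  sInf {B | IsGrMaximal ℳ B}

/-- Graded weakly semiprime submodule. -/
def IsGrWSemiprime {Γ R M σR σM : Type*} [CommRing R] [AddCommGroup M] [Module R M]
    [SetLike σR R] [SetLike σM M] (𝒜 : Γ → σR) (ℳ : Γ → σM) (U : Submodule R M) : Prop :=
  IsGradedSub ℳ U ∧ U ≠ ⊤ ∧
    ∀ (r : R) (m : M) (n : ℕ), 0 < n → SetLike.IsHomogeneousElem 𝒜 r →
      SetLike.IsHomogeneousElem ℳ m → r ^ n • m ≠ 0 → r ^ n • m ∈ U → r • m ∈ U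

/-- Graded weakly `J_gr`-semiprime submodule. -/
def IsGrWJgrSemiprime {Γ R M σR σM : Type*} [CommRing R] [AddCommGroup M] [Module R M]
    [SetLike σR R] [SetLike σM M] (𝒜 : Γ → σR) (ℳ : Γ → σM) (U : Submodule R M) : Prop :=
  IsGradedSub ℳ U ∧ U ≠ ⊤ ∧
    ∀ (r : R) (m : M) (n : ℕ), 0 < n → SetLike.IsHomogeneousElem 𝒜 r →
      SetLike.IsHomogeneousElem ℳ m → r ^ n • m ≠ 0 → r ^ n • m ∈ U → r • m ∈ U ⊔ Jgr ℳ

/-- The residual submodule `(U :_M L) = {m : M | L • m ⊆ U}`. -/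
def mcolon {R M : Type*} [CommRing R] [AddCommGroup M] [Module R M]
    (U : Submodule R M) (L : Ideal R) : Submodule R M where
  carrier := {m | ∀ x ∈ L, x • m ∈ U}
  add_mem' := by
    intro a b ha hb x hx
    simpa [smul_add] using U.add_mem (ha x hx) (hb x hx)
  zero_mem' := by intro x hx; simp
  smul_mem' := by
    intro c m hm x hx
    rw [smul_comm]
    exact U.smul_mem c (hm x hx)

/-!
The key fact is of Nakayama type: for homogeneous `r` and `k` with `r ^ n • k = 0`, the element
`r • k` lies in every graded maximal submodule, hence in `J_gr(M)`. So the case `r ^ n • k = 0`,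
which the weak condition leaves out, satisfies its conclusion anyway, and the two conditions are
compared by passing from a graded `K` to its homogeneous generators and from `m` to `K = R m`.
-/

namespace Submodule

variable {R M : Type*} [CommRing R] [AddCommGroup M] [Module R M]

theorem mem_of_one_sub_smul_mem_of_pow_smul_eq_zero (B : Submodule R M) {a : R} {k : M} {n : ℕ}
    (hB : (1 - a) • k ∈ B) (h0 : a ^ n • k = 0) : k ∈ B := by
  have hk : (∑ i ∈ Finset.range n, a ^ i) • (1 - a) • k = k := by
    rw [← mul_smul, geom_sum_mul_neg, sub_smul, h0, one_smul, sub_zero]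
  exact hk ▸ B.smul_mem _ hB

theorem ideal_span_singleton_pow_smul_span_singleton (r : R) (m : M) (n : ℕ) :
    Ideal.span {r} ^ n • span R {m} = span R {r ^ n • m} := by
  rw [Ideal.span_singleton_pow, ideal_span_singleton_smul, smul_span, Set.smul_set_singleton]

end Submodule

section Graded

variable {Γ R M σ : Type*} [CommRing R] [AddCommGroup M] [Module R M] [SetLike σ M]
  {ℳ : Γ → σ}

theorem isGradedSub_span {s : Set M} (hs : ∀ m ∈ s, SetLike.IsHomogeneousElem ℳ m) :
    IsGradedSub ℳ (Submodule.span R s) :=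
  le_antisymm (Submodule.span_mono fun m hm => ⟨Submodule.subset_span hm, hs m hm⟩)
    (Submodule.span_le.mpr fun _ hm => hm.1)

theorem isGradedSub_span_singleton {x : M} (hx : SetLike.IsHomogeneousElem ℳ x) :
    IsGradedSub ℳ (Submodule.span R {x}) :=
  isGradedSub_span fun _ hm => (Set.mem_singleton_iff.mp hm) ▸ hx

theorem IsGradedSub.sup {U V : Submodule R M} (hU : IsGradedSub ℳ U) (hV : IsGradedSub ℳ V) :
    IsGradedSub ℳ (U ⊔ V) := by
  have h : IsGradedSub ℳ (Submodule.span R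
      ({m | m ∈ U ∧ SetLike.IsHomogeneousElem ℳ m} ∪ {m | m ∈ V ∧ SetLike.IsHomogeneousElem ℳ m})) :=
    isGradedSub_span fun _ hm => hm.elim And.right And.right
  rwa [Submodule.span_union, ← hU, ← hV] at h

theorem IsGradedSub.le_of_isHomogeneousElem {K N : Submodule R M} (hK : IsGradedSub ℳ K)
    (h : ∀ k ∈ K, SetLike.IsHomogeneousElem ℳ k → k ∈ N) : K ≤ N := by
  rw [hK, Submodule.span_le]
  exact fun k hk => h k hk.1 hk.2

theorem IsGrMaximal.sup_span_singleton_eq_top {B : Submodule R M} (hB : IsGrMaximal ℳ B) {x : M}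
    (hx : SetLike.IsHomogeneousElem ℳ x) (hxB : x ∉ B) : B ⊔ Submodule.span R {x} = ⊤ := by
  obtain ⟨hBgr, -, hBmax⟩ := hB
  refine (hBmax _ (hBgr.sup (isGradedSub_span_singleton hx)) le_sup_left).resolve_left
    fun hLB => hxB ?_
  exact hLB ▸ Submodule.mem_sup_right (Submodule.mem_span_singleton_self x)

end Graded

section GradedSMul

variable {ιA ιB R M σR σM : Type*} [VAdd ιA ιB] [CommRing R] [AddCommGroup M] [Module R M]
  [SetLike σR R] [SetLike σM M] {𝒜 : ιA → σR} {ℳ : ιB → σM} [SetLike.GradedSMul 𝒜 ℳ]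

/-- If `r • k ∉ B`, maximality gives `k = b + s r • k` with `b ∈ B`, and `1 - s r` is invertible
on `k` since `(s r) ^ n • k = 0`; so `k ∈ B`. -/
theorem IsGrMaximal.smul_mem_of_pow_smul_eq_zero {B : Submodule R M} (hB : IsGrMaximal ℳ B)
    {r : R} {k : M} {n : ℕ} (hr : SetLike.IsHomogeneousElem 𝒜 r)
    (hk : SetLike.IsHomogeneousElem ℳ k) (h0 : r ^ n • k = 0) : r • k ∈ B := by
  by_contra hrk
  have hk_top : k ∈ B ⊔ Submodule.span R {r • k} :=
    hB.sup_span_singleton_eq_top (hr.graded_smul hk) hrk ▸ Submodule.mem_top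
  obtain ⟨b, hb, _, hs, hbs⟩ := Submodule.mem_sup.mp hk_top
  obtain ⟨s, rfl⟩ := Submodule.mem_span_singleton.mp hs
  have hb_eq : (1 - s * r) • k = b := by
    rw [sub_smul, one_smul, mul_smul, sub_eq_iff_eq_add, hbs]
  have hkB : k ∈ B := B.mem_of_one_sub_smul_mem_of_pow_smul_eq_zero (hb_eq ▸ hb)
    (by rw [mul_pow, mul_smul, h0, smul_zero])
  exact hrk (B.smul_mem r hkB)

theorem smul_mem_Jgr_of_pow_smul_eq_zero {r : R} {k : M} {n : ℕ}
    (hr : SetLike.IsHomogeneousElem 𝒜 r) (hk : SetLike.IsHomogeneousElem ℳ k)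
    (h0 : r ^ n • k = 0) : r • k ∈ Jgr (R := R) ℳ :=
  Submodule.mem_sInf.mpr fun _ hB => hB.smul_mem_of_pow_smul_eq_zero hr hk h0

end GradedSMul

variable {Γ : Type*} [AddGroup Γ] [DecidableEq Γ]
  {R : Type*} [CommRing R] (𝒜 : Γ → AddSubgroup R) [GradedRing 𝒜]
  {M : Type*} [AddCommGroup M] [Module R M]
  (ℳ : Γ → AddSubgroup M) [SetLike.GradedSMul 𝒜 ℳ] [DirectSum.Decomposition ℳ]

theorem stmt4 (U : Submodule R M) (hU : IsGradedSub ℳ U) (hprop : U ≠ ⊤) :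
    IsGrWJgrSemiprime 𝒜 ℳ U ↔
      ∀ K : Submodule R M, IsGradedSub ℳ K → ∀ r : R, SetLike.IsHomogeneousElem 𝒜 r →
        ∀ n : ℕ, 0 < n → (Ideal.span {r}) ^ n • K ≠ ⊥ → (Ideal.span {r}) ^ n • K ≤ U →
          Ideal.span {r} • K ≤ U ⊔ Jgr ℳ := by
  constructor
  · rintro ⟨-, -, hsp⟩ K hK r hr n hn - hle
    rw [Submodule.ideal_span_singleton_smul]
    refine Submodule.map_le_iff_le_comap.mpr (hK.le_of_isHomogeneousElem fun k hkK hk => ?_)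
    show r • k ∈ U ⊔ Jgr ℳ
    by_cases h0 : r ^ n • k = 0
    · exact Submodule.mem_sup_right (smul_mem_Jgr_of_pow_smul_eq_zero hr hk h0)
    · exact hsp r k n hn hr hk h0 (hle (Submodule.smul_mem_smul
        (Ideal.pow_mem_pow (Ideal.mem_span_singleton_self r) n) hkK))
  · intro h
    refine ⟨hU, hprop, fun r m n hn hr hm hne hmem => ?_⟩
    have hspan := h (Submodule.span R {m}) (isGradedSub_span_singleton hm) r hr n hn
    have hspan_one : Ideal.span {r} • Submodule.span R {m} = Submodule.span R {r • m} := by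
      simpa using Submodule.ideal_span_singleton_pow_smul_span_singleton r m 1
    rw [Submodule.ideal_span_singleton_pow_smul_span_singleton, Ne, Submodule.span_singleton_eq_bot,
      Submodule.span_singleton_le_iff_mem, hspan_one, Submodule.span_singleton_le_iff_mem] at hspan
    exact hspan hne hmem
end

section
/- Let M be a graded faithful R-module and U a proper graded submodule with J_gr(M/U) = {U} and J_gr(R) ⊆ (U :_R M). Then U is a graded weakly J_gr-semiprime submodule of M if and only if (U :_R M) is a graded weakly J_gr-semiprime ideal of R. -/
open Pointwise

variable {Γ : Type*} [AddGroup Γ] [DecidableEq Γ]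
  {R : Type*} [CommRing R] (𝒜 : Γ → AddSubgroup R) [GradedRing 𝒜]
  {M : Type*} [AddCommGroup M] [Module R M]
  (ℳ : Γ → AddSubgroup M) [SetLike.GradedSMul 𝒜 ℳ] [DirectSum.Decomposition ℳ]

/-!
Since `J_gr(M/U) = 0`, the submodule `U` is the intersection of the preimages `B` of the graded
maximal submodules of `M/U`, and these preimages are graded maximal in `M`. For homogeneous `r`
the residual `(B :_M r)` is a graded submodule containing `B`, hence equal to `B` or to `M`; in
both cases `rⁿx ∈ B` forces `rx ∈ B`. So `rⁿx ∈ U` implies `rx ∈ U` for all homogeneous `r` and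
all `x`, and this makes both `U` and `(U :_R M)` graded weakly `J_gr`-semiprime.
-/

open DirectSum

section LinearMap

variable {ι N : Type*} [AddCommGroup N] [Module R N] {𝒢 : ι → AddSubgroup M} (f : M →ₗ[R] N)

theorem IsGradedSub.map {L : Submodule R M} (hL : IsGradedSub 𝒢 L) :
    IsGradedSub (fun i => (𝒢 i).map f.toAddMonoidHom) (L.map f) := by
  refine le_antisymm ?_ (Submodule.span_le.mpr fun y hy => hy.1)
  conv_lhs => rw [hL, Submodule.map_span]
  refine Submodule.span_mono ?_
  rintro _ ⟨x, ⟨hxL, i, hxi⟩, rfl⟩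
  exact ⟨Submodule.mem_map_of_mem hxL, i, AddSubgroup.mem_map_of_mem _ hxi⟩

theorem IsGradedSub.comap {B : Submodule R N}
    (hB : IsGradedSub (fun i => (𝒢 i).map f.toAddMonoidHom) B)
    (hker : IsGradedSub 𝒢 (LinearMap.ker f)) :
    IsGradedSub 𝒢 (B.comap f) := by
  set T := Submodule.span R {x | x ∈ B.comap f ∧ SetLike.IsHomogeneousElem 𝒢 x}
  have hkerT : LinearMap.ker f ≤ T := by
    rw [hker]
    exact Submodule.span_mono fun x ⟨hx, hxh⟩ =>
      ⟨Submodule.mem_comap.mpr ((LinearMap.mem_ker.mp hx).symm ▸ B.zero_mem), hxh⟩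
  have hBT : B ≤ T.map f := by
    rw [hB]
    refine Submodule.span_le.mpr ?_
    rintro _ ⟨hyB, i, hyi⟩
    obtain ⟨x, hxi, rfl⟩ := AddSubgroup.mem_map.mp hyi
    exact Submodule.mem_map_of_mem (Submodule.subset_span ⟨hyB, i, hxi⟩)
  refine le_antisymm ?_ (Submodule.span_le.mpr fun x hx => hx.1)
  calc B.comap f ≤ (T.map f).comap f := Submodule.comap_mono hBT
    _ = T := Submodule.comap_map_eq_self hkerT

theorem IsGrMaximal.comap (hf : Function.Surjective f) (hker : IsGradedSub 𝒢 (LinearMap.ker f))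
    {B : Submodule R N} (hB : IsGrMaximal (fun i => (𝒢 i).map f.toAddMonoidHom) B) :
    IsGrMaximal 𝒢 (B.comap f) := by
  obtain ⟨hBgr, hBtop, hBmax⟩ := hB
  have hker_le : LinearMap.ker f ≤ B.comap f := LinearMap.ker_le_comap f
  refine ⟨hBgr.comap f hker, fun htop => hBtop ?_, fun L hL hle => ?_⟩
  · rw [← Submodule.map_comap_eq_of_surjective hf B, htop, Submodule.map_top,
      LinearMap.range_eq_top.mpr hf]
  · have hmap : B ≤ L.map f := by
      rw [← Submodule.map_comap_eq_of_surjective hf B]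
      exact Submodule.map_mono hle
    have hL_eq : (L.map f).comap f = L := Submodule.comap_map_eq_self (hker_le.trans hle)
    rcases hBmax _ (hL.map f) hmap with h | h
    · exact .inl (by rw [← hL_eq, h])
    · exact .inr (by rw [← hL_eq, h, Submodule.comap_top])

end LinearMap

omit [GradedRing 𝒜] in
theorem coe_decompose_smul_of_left_mem {d : Γ} {r : R} (hr : r ∈ 𝒜 d) (x : M) (g : Γ) :
    (decompose ℳ (r • x) (d + g) : M) = r • (decompose ℳ x g : M) := by
  induction x using Decomposition.inductionOn ℳ with
  | zero => simp
  | add x y hx hy => simp [smul_add, hx, hy]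
  | @homogeneous i m =>
    have hrm : r • (m : M) ∈ ℳ (d + i) := SetLike.GradedSMul.smul_mem hr m.2
    by_cases hig : i = g
    · subst hig
      rw [decompose_of_mem_same ℳ hrm, decompose_of_mem_same ℳ m.2]
    · rw [decompose_of_mem_ne ℳ hrm (by simpa using hig), decompose_of_mem_ne ℳ m.2 hig,
        smul_zero]

theorem coe_decompose_smul_of_right_mem {h : Γ} {m : M} (hm : m ∈ ℳ h) (r : R) (g : Γ) :
    (decompose ℳ (r • m) (g + h) : M) = (decompose 𝒜 r g : R) • m := by
  induction r using Decomposition.inductionOn 𝒜 with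
  | zero => simp
  | add r s hr hs => simp [add_smul, hr, hs]
  | @homogeneous i r =>
    have hrm : (r : R) • m ∈ ℳ (i + h) := SetLike.GradedSMul.smul_mem r.2 hm
    by_cases hig : i = g
    · subst hig
      rw [decompose_of_mem_same ℳ hrm, decompose_of_mem_same 𝒜 r.2]
    · rw [decompose_of_mem_ne ℳ hrm (by simpa using hig), decompose_of_mem_ne 𝒜 r.2 hig,
        zero_smul]

include 𝒜 in
theorem isGradedSub_iff_isHomogeneous (V : Submodule R M) :
    IsGradedSub ℳ V ↔ V.IsHomogeneous ℳ := by
  classical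
  constructor
  · intro hV i x hx
    rw [hV] at hx
    induction hx using Submodule.span_induction generalizing i with
    | mem y hy =>
      obtain ⟨hyV, j, hyj⟩ := hy
      by_cases hji : j = i
      · subst hji; rwa [decompose_of_mem_same ℳ hyj]
      · rw [decompose_of_mem_ne ℳ hyj hji]; exact V.zero_mem
    | zero => simp
    | add a b _ _ ha hb =>
      rw [decompose_add, DirectSum.add_apply, AddMemClass.coe_add]
      exact V.add_mem (ha i) (hb i)
    | smul r y _ ih =>
      rw [← sum_support_decompose 𝒜 r, Finset.sum_smul, decompose_sum, DFinsupp.finsetSum_apply,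
        AddSubmonoidClass.coe_finsetSum]
      refine V.sum_mem fun k _ => ?_
      rw [← add_neg_cancel_left k i,
        coe_decompose_smul_of_left_mem 𝒜 ℳ (SetLike.coe_mem (decompose 𝒜 r k))]
      exact V.smul_mem _ (ih _)
  · intro hV
    refine le_antisymm (fun x hx => ?_) (Submodule.span_le.mpr fun m hm => hm.1)
    rw [← sum_support_decompose ℳ x]
    exact Submodule.sum_mem _ fun i _ => Submodule.subset_span ⟨hV i hx, i, SetLike.coe_mem _⟩

theorem IsGradedSub.comap_smul {B : Submodule R M} (hB : IsGradedSub ℳ B) {r : R}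
    (hr : SetLike.IsHomogeneousElem 𝒜 r) : IsGradedSub ℳ (B.comap (LinearMap.lsmul R M r)) := by
  obtain ⟨d, hd⟩ := hr
  rw [isGradedSub_iff_isHomogeneous 𝒜] at hB ⊢
  intro i x hx
  change r • _ ∈ B
  rw [← coe_decompose_smul_of_left_mem 𝒜 ℳ hd]
  exact hB (d + i) hx

theorem IsGrMaximal.smul_mem_of_pow_smul_mem {B : Submodule R M} (hB : IsGrMaximal ℳ B) {r : R}
    (hr : SetLike.IsHomogeneousElem 𝒜 r) {x : M} {n : ℕ} (h : r ^ n • x ∈ B) : r • x ∈ B := by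
  rcases hB.2.2 _ (hB.1.comap_smul 𝒜 ℳ hr) fun y hy => B.smul_mem r hy with hK | hK
  · have hcancel : ∀ y, r • y ∈ B → y ∈ B := fun y hy => by
      rw [← hK]; exact hy
    suffices x ∈ B from B.smul_mem r this
    induction n generalizing x with
    | zero => simpa using h
    | succ n ih => exact ih (hcancel _ (by rwa [smul_smul, ← pow_succ']))
  · exact (Submodule.eq_top_iff'.mp hK x : _)

theorem smul_mem_of_pow_smul_mem_of_jgr_quotient_eq_bot {U : Submodule R M}
    (hU : IsGradedSub ℳ U)
    (hq : Jgr (fun g => AddSubgroup.map U.mkQ.toAddMonoidHom (ℳ g)) = (⊥ : Submodule R (M ⧸ U)))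
    {r : R} (hr : SetLike.IsHomogeneousElem 𝒜 r) {x : M} {n : ℕ} (h : r ^ n • x ∈ U) :
    r • x ∈ U := by
  have hU' : IsGradedSub ℳ (LinearMap.ker U.mkQ) := by rwa [Submodule.ker_mkQ]
  have hJ : U.mkQ (r • x) ∈ Jgr (fun g => AddSubgroup.map U.mkQ.toAddMonoidHom (ℳ g)) :=
    Submodule.mem_sInf.mpr fun B hB =>
      (hB.comap U.mkQ U.mkQ_surjective hU').smul_mem_of_pow_smul_mem 𝒜 ℳ hr
        (LinearMap.ker_le_comap _ (by rwa [Submodule.ker_mkQ]))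
  rwa [hq, Submodule.mem_bot, Submodule.mkQ_apply, Submodule.Quotient.mk_eq_zero] at hJ

theorem IsGradedSub.colon_top {U : Submodule R M} (hU : IsGradedSub ℳ U) :
    IsGradedSub 𝒜 (U.colon ⊤) := by
  rw [isGradedSub_iff_isHomogeneous 𝒜 ℳ] at hU
  rw [isGradedSub_iff_isHomogeneous 𝒜 𝒜]
  intro g c hc
  simp only [Submodule.mem_colon, Set.top_eq_univ, Set.mem_univ, forall_const] at hc ⊢
  intro m
  induction m using Decomposition.inductionOn ℳ with
  | zero => simp
  | add m m' hm hm' => simpa [smul_add] using U.add_mem hm hm'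
  | @homogeneous h m =>
    rw [← coe_decompose_smul_of_right_mem 𝒜 ℳ m.2]
    exact hU _ (hc m)

theorem isGrWJgrSemiprime_colon_top_of_pow_smul_mem {U : Submodule R M} (hU : IsGradedSub ℳ U)
    (hne : U ≠ ⊤)
    (hrad : ∀ r : R, SetLike.IsHomogeneousElem 𝒜 r → ∀ (x : M) (n : ℕ),
      r ^ n • x ∈ U → r • x ∈ U) :
    IsGrWJgrSemiprime 𝒜 𝒜 (U.colon ⊤) := by
  refine ⟨hU.colon_top 𝒜 ℳ, fun h => hne ?_, fun r b n _ hr _ _ h => Submodule.mem_sup_left ?_⟩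
  · simpa [Submodule.colon_eq_top_iff_subset] using h
  · simp only [Submodule.mem_colon, Set.top_eq_univ, Set.mem_univ, forall_const, smul_eq_mul,
      mul_smul] at h ⊢
    exact fun m => hrad r hr _ n (h m)

theorem stmt17 (U : Submodule R M) (hU : IsGradedSub ℳ U) (hprop : U ≠ ⊤)
    (hq : Jgr (fun g => AddSubgroup.map U.mkQ.toAddMonoidHom (ℳ g)) = (⊥ : Submodule R (M ⧸ U))) :
    IsGrWJgrSemiprime 𝒜 ℳ U ↔ IsGrWJgrSemiprime 𝒜 𝒜 (U.colon ⊤) := by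
  have hrad : ∀ r : R, SetLike.IsHomogeneousElem 𝒜 r → ∀ (x : M) (n : ℕ),
      r ^ n • x ∈ U → r • x ∈ U := fun r hr _ _ =>
    smul_mem_of_pow_smul_mem_of_jgr_quotient_eq_bot 𝒜 ℳ hU hq hr
  exact iff_of_true
    ⟨hU, hprop, fun r m n _ hr _ _ h => Submodule.mem_sup_left (hrad r hr m n h)⟩
    (isGrWJgrSemiprime_colon_top_of_pow_smul_mem 𝒜 ℳ hU hprop hrad)
end
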